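/- arXiv:2308.08133 — 3 statements merged into one kernel-verified Lean document; each statement's English description precedes it below -/
import Mathlib

section
/- Let D ⊆ ℝ³ be a bounded Lebesgue-measurable set and a ∈ ∂D a boundary point at which D satisfies the cone condition: there exist r > 0 and a nonempty relatively open subset S of the unit sphere such that a + V(r,S) ⊆ D, where V(r,S) = {t·v : 0 < t < r, v ∈ S}. Then the map x ↦ ∫_D 1/(16π²‖y−x‖⁴) dy (Lebesgue integral with values in [0,∞]) tends to ∞ as x → a in ℝ³; that is, the Dirichlet energy ∫_D ‖∇G(y−x)‖² dy of the fundamental solution with pole at x over D blows up as the pole approaches the boundary point a. -/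
open MeasureTheory Real Filter

noncomputable section

/-- Euclidean three-space. -/
abbrev E3 := EuclideanSpace ℝ (Fin 3)

/-- The finite cone with vertex at the origin determined by a radius `r` and a
set `S` of directions on the unit sphere: `{t • v : 0 < t < r, v ∈ S}`. -/
def coneV (r : ℝ) (S : Set E3) : Set E3 :=
  {z | ∃ t v, 0 < t ∧ t < r ∧ v ∈ S ∧ z = t • v}

open Metric Set Topology
open scoped ENNReal Pointwise

/-! The cone `a + V(r,S)` contains the balls `B(a + t v, c t)` for a direction `v ∈ S`, a
fixed `c > 0` and all small `t > 0`, because `z ↦ z / ‖z‖` is continuous at `v` and invariant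
under dilations. When `‖x - a‖ < t / 4`, every point of such a ball lies at distance in
`(0, 2t]` from `x`, so the integral is at least
`|B(0, c t)| / (16π² (2t)⁴) = |B(0, c)| / (256 π² t)`, which is unbounded as `t → 0⁺`. -/

theorem tendsto_nhds_top_of_eventually_eventually_le {α β γ : Type*} [TopologicalSpace γ]
    [Preorder γ] [OrderTop γ] [OrderTopology γ] {l : Filter α} {l' : Filter β} [l'.NeBot]
    {F : α → γ} {g : β → γ} (hg : Tendsto g l' (𝓝 ⊤))
    (h : ∀ᶠ t in l', ∀ᶠ x in l, g t ≤ F x) :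
    Tendsto F l (𝓝 ⊤) := by
  refine tendsto_order.2 ⟨fun b hb => ?_, fun b hb => absurd hb not_top_lt⟩
  obtain ⟨t, hbt, ht⟩ := (((tendsto_order.1 hg).1 b hb).and h).exists
  exact ht.mono fun x hx => hbt.trans_le hx

theorem mul_measure_le_setLIntegral {α : Type*} [MeasurableSpace α] {μ : Measure α}
    {B D : Set α} {f : α → ℝ≥0∞} {m : ℝ≥0∞} (hB : MeasurableSet B) (hBD : B ⊆ D)
    (hf : ∀ y ∈ B, m ≤ f y) : m * μ B ≤ ∫⁻ y in D, f y ∂μ :=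
  calc m * μ B = ∫⁻ _ in B, m ∂μ := (setLIntegral_const B m).symm
    _ ≤ ∫⁻ y in B, f y ∂μ := setLIntegral_mono' hB hf
    _ ≤ ∫⁻ y in D, f y ∂μ := lintegral_mono_set hBD

section Normed

variable {E : Type*} [NormedAddCommGroup E] [NormedSpace ℝ E]

theorem inv_norm_smul_smul_of_pos {t : ℝ} (ht : 0 < t) (w : E) :
    ‖t • w‖⁻¹ • t • w = ‖w‖⁻¹ • w := by
  rw [norm_smul, Real.norm_of_nonneg ht.le, smul_smul]
  congr 1
  field_simp

theorem exists_pos_forall_mem_ball_smul_inv_norm_smul_mem {U : Set E} (hU : IsOpen U) {v : E}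
    (hvU : v ∈ U) (hv : ‖v‖ = 1) :
    ∃ δ > 0, ∀ t > 0, ∀ z ∈ ball (t • v) (t * δ), ‖z‖⁻¹ • z ∈ U := by
  have hcont : ContinuousAt (fun w : E => ‖w‖⁻¹ • w) v :=
    (continuous_norm.continuousAt.inv₀ (by simp [hv])).smul continuousAt_id
  have hnhds : (fun w : E => ‖w‖⁻¹ • w) ⁻¹' U ∈ 𝓝 v :=
    hcont.preimage_mem_nhds (by simpa [hv] using hU.mem_nhds hvU)
  obtain ⟨δ, hδ, hball⟩ := Metric.mem_nhds_iff.1 hnhds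
  refine ⟨δ, hδ, fun t ht z hz => ?_⟩
  rw [show ball (t • v) (t * δ) = t • ball v δ by
    rw [_root_.smul_ball ht.ne', Real.norm_of_nonneg ht.le]] at hz
  obtain ⟨w, hw, rfl⟩ := hz
  rw [inv_norm_smul_smul_of_pos ht]
  exact hball hw

theorem dist_pos_and_le_of_mem_ball {a x y v : E} {t c : ℝ} (hv : ‖v‖ = 1) (hc : c ≤ 1 / 4)
    (hx : x ∈ ball a (t / 4)) (hy : y ∈ ball (a + t • v) (t * c)) :
    0 < dist y x ∧ dist y x ≤ 2 * t := by
  rw [mem_ball] at hx hy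
  have ht : 0 < t := by linarith [dist_nonneg (x := x) (y := a)]
  have hpa : dist (a + t • v) a = t := by
    rw [dist_self_add_left, norm_smul, hv, mul_one, Real.norm_of_nonneg ht.le]
  have htc : t * c ≤ t / 4 := by nlinarith
  constructor
  · linarith [dist_triangle4 (a + t • v) y x a, dist_comm y (a + t • v)]
  · linarith [dist_triangle4 y (a + t • v) a x, dist_comm a x]

end Normed

theorem exists_ball_smul_subset_coneV {U : Set E3} (hU : IsOpen U) {v : E3}
    (hv : v ∈ U ∩ sphere 0 1) :
    ∃ c > 0, c ≤ 1 / 4 ∧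
      ∀ r t, 0 < t → 2 * t ≤ r → ball (t • v) (t * c) ⊆ coneV r (U ∩ sphere 0 1) := by
  have hv1 : ‖v‖ = 1 := mem_sphere_zero_iff_norm.1 hv.2
  obtain ⟨δ, hδ, hU'⟩ := exists_pos_forall_mem_ball_smul_inv_norm_smul_mem hU hv.1 hv1
  refine ⟨min δ (1 / 4), by positivity, min_le_right _ _, fun r t ht htr z hz => ?_⟩
  have htc : t * min δ (1 / 4) ≤ t / 4 := by nlinarith [min_le_right δ (1 / 4)]
  have hzt : |‖z‖ - t| < t / 4 := by
    have := abs_norm_sub_norm_le z (t • v)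
    rw [norm_smul, hv1, mul_one, Real.norm_of_nonneg ht.le, ← dist_eq_norm] at this
    linarith [mem_ball.1 hz]
  have hz0 : 0 < ‖z‖ := by linarith [neg_abs_le (‖z‖ - t)]
  refine ⟨‖z‖, ‖z‖⁻¹ • z, hz0, by linarith [le_abs_self (‖z‖ - t)], ⟨?_, ?_⟩,
    (smul_inv_smul₀ hz0.ne' z).symm⟩
  · exact hU' t ht z (ball_subset_ball (by gcongr; exact min_le_left _ _) hz)
  · exact mem_sphere_zero_iff_norm.2 (norm_smul_inv_norm (norm_pos_iff.1 hz0))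

theorem tendsto_kernel_mul_volume_ball_nhdsGT_zero {c : ℝ} (hc : 0 < c) :
    Tendsto (fun t : ℝ => ENNReal.ofReal (1 / (16 * π ^ 2 * (2 * t) ^ 4)) *
      volume (ball (0 : E3) (t * c))) (𝓝[>] 0) (𝓝 ⊤) := by
  have hscale : (fun t : ℝ => ENNReal.ofReal (1 / (16 * π ^ 2 * (2 * t) ^ 4)) *
      volume (ball (0 : E3) (t * c))) =ᶠ[𝓝[>] 0]
        fun t => ENNReal.ofReal ((256 * π ^ 2)⁻¹ * t⁻¹) * volume (ball (0 : E3) c) := by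
    filter_upwards [self_mem_nhdsWithin] with t (ht : 0 < t)
    rw [Measure.addHaar_ball_mul_of_pos volume 0 ht, finrank_euclideanSpace_fin, ← mul_assoc,
      ← ENNReal.ofReal_mul (by positivity)]
    congr 2
    field_simp
    ring
  have hball : volume (ball (0 : E3) c) ≠ 0 := (measure_ball_pos volume 0 hc).ne'
  have hinv :
      Tendsto (fun t : ℝ => ENNReal.ofReal ((256 * π ^ 2)⁻¹ * t⁻¹)) (𝓝[>] 0) (𝓝 ⊤) :=
    ENNReal.tendsto_ofReal_atTop.comp (tendsto_inv_nhdsGT_zero.const_mul_atTop (by positivity))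
  refine (tendsto_congr' hscale).2 ?_
  simpa only [ENNReal.top_mul hball] using
    ENNReal.Tendsto.mul_const (b := volume (ball (0 : E3) c)) hinv
      (Or.inl ENNReal.top_ne_zero)

theorem energy_blowup_at_cone_boundary_point_general
    (D : Set E3)
    (a : E3)
    (r : ℝ) (hr : 0 < r) (S : Set E3)
    (hSne : S.Nonempty)
    (hSopen : ∃ U : Set E3, IsOpen U ∧ S = U ∩ Metric.sphere (0 : E3) 1)
    (hcone : (fun z => a + z) '' coneV r S ⊆ D) :
    Tendsto (fun x : E3 => ∫⁻ y in D, ENNReal.ofReal (1 / (16 * π ^ 2 * ‖y - x‖ ^ 4)))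
      (nhds a) (nhds ⊤) := by
  obtain ⟨U, hU, rfl⟩ := hSopen
  obtain ⟨v, hv⟩ := hSne
  obtain ⟨c, hc0, hc, hconeBall⟩ := exists_ball_smul_subset_coneV hU hv
  refine tendsto_nhds_top_of_eventually_eventually_le
    (tendsto_kernel_mul_volume_ball_nhdsGT_zero hc0) ?_
  filter_upwards [Ioo_mem_nhdsGT (half_pos hr)] with t ⟨ht, htr⟩
  filter_upwards [ball_mem_nhds a (by positivity : (0 : ℝ) < t / 4)] with x hx
  have hballD : ball (a + t • v) (t * c) ⊆ D := fun y hy => by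
    have hya : y - a ∈ ball (t • v) (t * c) := by simpa [dist_eq_norm, sub_sub] using hy
    simpa using hcone ⟨y - a, hconeBall r t ht (by linarith) hya, rfl⟩
  rw [← Measure.addHaar_ball_center volume (a + t • v)]
  refine mul_measure_le_setLIntegral measurableSet_ball hballD fun y hy => ?_
  obtain ⟨hpos, hle⟩ :=
    dist_pos_and_le_of_mem_ball (mem_sphere_zero_iff_norm.1 hv.2) hc hx hy
  rw [← dist_eq_norm]
  gcongr

/-- If `D ⊆ ℝ³` is a bounded Lebesgue-measurable set satisfying the cone
condition at a boundary point `a ∈ ∂D`, then the Dirichlet energy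
`∫_D ‖∇G(y−x)‖² dy = ∫_D 1/(16π²‖y−x‖⁴) dy` of the fundamental solution with
pole at `x` blows up as `x → a`.  This is the analytic core of part (c) of
Theorem 1 (formula (1.6)). -/
theorem energy_blowup_at_cone_boundary_point
    (D : Set E3) (hD : MeasurableSet D) (hDb : Bornology.IsBounded D)
    (a : E3) (haD : a ∈ frontier D)
    (r : ℝ) (hr : 0 < r) (S : Set E3)
    (hSsub : S ⊆ Metric.sphere (0 : E3) 1)
    (hSne : S.Nonempty)
    (hSopen : ∃ U : Set E3, IsOpen U ∧ S = U ∩ Metric.sphere (0 : E3) 1)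
    (hcone : (fun z => a + z) '' coneV r S ⊆ D) :
    Tendsto (fun x : E3 => ∫⁻ y in D, ENNReal.ofReal (1 / (16 * π ^ 2 * ‖y - x‖ ^ 4)))
      (nhds a) (nhds ⊤) :=
  energy_blowup_at_cone_boundary_point_general D a r hr S hSne hSopen hcone
end
end

section
/- Let Ω ⊆ ℝ³ be a bounded open set and b ∈ ∂Ω a boundary point at which the exterior E = ℝ³ \ closure(Ω) satisfies the cone condition: there exist r > 0 and a nonempty relatively open subset S of the unit sphere such that b + V(r,S) ⊆ ℝ³ \ closure(Ω), where V(r,S) = {t·v : 0 < t < r, v ∈ S}. Then the map x ↦ ∫_{ℝ³ \ closure(Ω)} 1/(16π²‖y−x‖⁴) dy (Lebesgue integral with values in [0,∞]) tends to ∞ as x → b in ℝ³; that is, the exterior Dirichlet energy ∫_{ℝ³ \ closure(Ω)} ‖∇G(y−x)‖² dy blows up as x approaches b. -/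
/-!
For `y ≠ b` the integrand `1 / (16π²‖y - x‖⁴)` is continuous in `x` at `b`, so Fatou's lemma bounds
the liminf of the energy at `b` from below by the energy with `x = b`, and it remains to see that
this is infinite. It dominates the integral of `‖z‖⁻⁴` over the cone `V(r,S)`, which is infinite:
the cone contains its image under `z ↦ z / 2`, and since the kernel is homogeneous of degree
`-4 < -3` the integral over that half-size copy is twice the integral over the whole cone, which
is positive.
-/

open MeasureTheory Real Filter

noncomputable section

open Set Topology Module
open scoped ENNReal Pointwise

theorem tendsto_lintegral_nhds_top_of_ae_continuousAt {X α : Type*} [TopologicalSpace X]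
    [FirstCountableTopology X] [MeasurableSpace α] {μ : Measure α} {F : X → α → ℝ≥0∞} {b : X}
    (hF : ∀ x, AEMeasurable (F x) μ) (hcont : ∀ᵐ y ∂μ, ContinuousAt (fun x => F x y) b)
    (htop : ∫⁻ y, F b y ∂μ = ∞) :
    Tendsto (fun x => ∫⁻ y, F x y ∂μ) (𝓝 b) (𝓝 ∞) := by
  refine tendsto_of_le_liminf_of_limsup_le ?_ le_top
  calc ∞ = ∫⁻ y, F b y ∂μ := htop.symm
    _ = ∫⁻ y, liminf (fun x => F x y) (𝓝 b) ∂μ :=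
        lintegral_congr_ae (hcont.mono fun _ h => h.liminf_eq.symm)
    _ ≤ liminf (fun x => ∫⁻ y, F x y ∂μ) (𝓝 b) := lintegral_liminf_le' hF

theorem ENNReal.eq_top_of_mul_le_self {k x : ℝ≥0∞} (hk : 1 < k) (hx : x ≠ 0) (h : k * x ≤ x) :
    x = ∞ := by
  by_contra hx'
  simpa using (ENNReal.mul_lt_mul_left hx hx' hk).trans_le h

section Homogeneity

variable {E : Type*} [NormedAddCommGroup E] [NormedSpace ℝ E] [FiniteDimensional ℝ E]
  [MeasurableSpace E] [BorelSpace E] (μ : Measure E) [μ.IsAddHaarMeasure]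

theorem setLIntegral_smul_set {c : ℝ} (hc : 0 < c) (f : E → ℝ≥0∞) (K : Set E) :
    ∫⁻ y in c • K, f y ∂μ = ENNReal.ofReal (c ^ finrank ℝ E) * ∫⁻ w in K, f (c • w) ∂μ := by
  have hemb : MeasurableEmbedding (c • · : E → E) :=
    (Homeomorph.smulOfNeZero c hc.ne').measurableEmbedding
  have hc' : 0 < c ^ finrank ℝ E := by positivity
  rw [(hemb.measurable.measurePreserving μ).setLIntegral_comp_emb hemb, image_smul,
    Measure.map_addHaar_smul μ hc.ne', abs_inv, abs_of_pos hc', Measure.restrict_smul,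
    lintegral_smul_measure, smul_eq_mul, ← mul_assoc, ← ENNReal.ofReal_mul hc'.le,
    mul_inv_cancel₀ hc'.ne', ENNReal.ofReal_one, one_mul]

theorem setLIntegral_div_norm_pow_eq_top {K : Set E} {a c : ℝ} {n : ℕ} (ha : 0 < a)
    (hn : finrank ℝ E < n) (hc0 : 0 < c) (hc1 : c < 1) (hcK : c • K ⊆ K) (hK0 : (0 : E) ∉ K)
    (hK : 0 < μ K) :
    ∫⁻ z in K, ENNReal.ofReal (a / ‖z‖ ^ n) ∂μ = ∞ := by
  set f : E → ℝ≥0∞ := fun z => ENNReal.ofReal (a / ‖z‖ ^ n)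
  have hf_meas : Measurable f := by fun_prop
  have hscale : ∀ w, f (c • w) = ENNReal.ofReal (c ^ n)⁻¹ * f w := fun w => by
    simp only [f]
    rw [← ENNReal.ofReal_mul (by positivity), norm_smul, norm_of_nonneg hc0.le, mul_pow,
      inv_mul_eq_div, div_mul_eq_div_div_swap]
  have hsupp : K ⊆ Function.support f := fun z hz => by
    have : z ≠ 0 := fun h => hK0 (h ▸ hz)
    simp [f, ha, this]
  have hpos : ∫⁻ z in K, f z ∂μ ≠ 0 :=
    ((setLIntegral_pos_iff hf_meas).2 (by rwa [inter_eq_right.2 hsupp])).ne'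
  have hgrowth : ENNReal.ofReal (c ^ finrank ℝ E * (c ^ n)⁻¹) * ∫⁻ z in K, f z ∂μ ≤
      ∫⁻ z in K, f z ∂μ :=
    calc _ = ∫⁻ y in c • K, f y ∂μ := by
          simp_rw [setLIntegral_smul_set μ hc0, hscale,
            lintegral_const_mul' _ _ ENNReal.ofReal_ne_top,
            ENNReal.ofReal_mul (by positivity : (0 : ℝ) ≤ c ^ finrank ℝ E), mul_assoc]
      _ ≤ ∫⁻ z in K, f z ∂μ := lintegral_mono_set hcK
  refine ENNReal.eq_top_of_mul_le_self ?_ hpos hgrowth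
  rw [← ENNReal.ofReal_one, ENNReal.ofReal_lt_ofReal_iff (by positivity), ← div_eq_mul_inv,
    one_lt_div (by positivity)]
  exact pow_lt_pow_right_of_lt_one₀ hc0 hc1 hn

end Homogeneity

section Cone

variable {r : ℝ} {S : Set E3}

theorem mem_coneV_iff (hS : S ⊆ Metric.sphere 0 1) {z : E3} :
    z ∈ coneV r S ↔ 0 < ‖z‖ ∧ ‖z‖ < r ∧ ‖z‖⁻¹ • z ∈ S := by
  constructor
  · rintro ⟨t, v, ht, htr, hv, rfl⟩
    have hnorm : ‖t • v‖ = t := by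
      rw [norm_smul, mem_sphere_zero_iff_norm.1 (hS hv), norm_of_nonneg ht.le, mul_one]
    rwa [hnorm, smul_smul, inv_mul_cancel₀ ht.ne', one_smul, and_iff_right ht, and_iff_right htr]
  · rintro ⟨hz, hzr, hzS⟩
    exact ⟨‖z‖, ‖z‖⁻¹ • z, hz, hzr, hzS, by rw [smul_smul, mul_inv_cancel₀ hz.ne', one_smul]⟩

theorem isOpen_coneV (hS : S ⊆ Metric.sphere 0 1)
    (hSopen : ∃ U : Set E3, IsOpen U ∧ S = U ∩ Metric.sphere 0 1) : IsOpen (coneV r S) := by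
  obtain ⟨U, hU, rfl⟩ := hSopen
  have hcone : coneV r (U ∩ Metric.sphere 0 1) =
      ({0}ᶜ ∩ Metric.ball 0 r) ∩ (fun z : E3 => ‖z‖⁻¹ • z) ⁻¹' U := by
    ext z
    simp only [mem_coneV_iff hS, mem_inter_iff, mem_compl_singleton_iff, mem_ball_zero_iff,
      mem_preimage, mem_sphere_zero_iff_norm, norm_pos_iff]
    constructor
    · exact fun ⟨hz, hzr, hzU, _⟩ => ⟨⟨hz, hzr⟩, hzU⟩
    · rintro ⟨⟨hz, hzr⟩, hzU⟩
      refine ⟨hz, hzr, hzU, ?_⟩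
      rw [norm_smul, norm_inv, norm_norm, inv_mul_cancel₀ (norm_ne_zero_iff.2 hz)]
  rw [hcone]
  exact ((continuous_norm.continuousOn.inv₀ fun z hz => norm_ne_zero_iff.2 hz.1).smul
    continuousOn_id).isOpen_inter_preimage (isOpen_compl_singleton.inter Metric.isOpen_ball) hU

theorem coneV_nonempty (hr : 0 < r) (hS : S.Nonempty) : (coneV r S).Nonempty :=
  let ⟨v, hv⟩ := hS
  ⟨(r / 2) • v, r / 2, v, half_pos hr, half_lt_self hr, hv, rfl⟩

theorem zero_notMem_coneV (hS : S ⊆ Metric.sphere 0 1) : (0 : E3) ∉ coneV r S := by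
  simp [mem_coneV_iff hS]

theorem smul_coneV_subset {c : ℝ} (hc : 0 < c) (hc1 : c ≤ 1) : c • coneV r S ⊆ coneV r S := by
  rintro _ ⟨_, ⟨t, v, ht, htr, hv, rfl⟩, rfl⟩
  exact ⟨c * t, v, mul_pos hc ht, by nlinarith, hv, smul_smul c t v⟩

end Cone

theorem exterior_energy_blowup_at_boundary_general
    (Ω : Set E3)
    (b : E3)
    (r : ℝ) (hr : 0 < r) (S : Set E3)
    (hSsub : S ⊆ Metric.sphere (0 : E3) 1)
    (hSne : S.Nonempty)
    (hSopen : ∃ U : Set E3, IsOpen U ∧ S = U ∩ Metric.sphere (0 : E3) 1)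
    (hcone : (fun z => b + z) '' coneV r S ⊆ (closure Ω)ᶜ) :
    Tendsto
      (fun x : E3 => ∫⁻ y in (closure Ω)ᶜ,
        ENNReal.ofReal (1 / (16 * π ^ 2 * ‖y - x‖ ^ 4)))
      (nhds b) (nhds ⊤) := by
  set f : E3 → ℝ≥0∞ := fun z => ENNReal.ofReal (1 / (16 * π ^ 2 * ‖z‖ ^ 4))
  have hcone_top : ∫⁻ z in coneV r S, f z = ∞ := by
    simp only [f, div_mul_eq_div_div]
    exact setLIntegral_div_norm_pow_eq_top volume (by positivity) (by simp) one_half_pos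
      one_half_lt_one (smul_coneV_subset one_half_pos one_half_lt_one.le) (zero_notMem_coneV hSsub)
      ((isOpen_coneV hSsub hSopen).measure_pos volume (coneV_nonempty hr hSne))
  refine tendsto_lintegral_nhds_top_of_ae_continuousAt (fun x => by fun_prop) ?_ (eq_top_iff.2 ?_)
  · filter_upwards [ae_restrict_of_ae (measure_eq_zero_iff_ae_notMem.1 (measure_singleton b))]
      with y hy
    have hden : 16 * π ^ 2 * ‖y - b‖ ^ 4 ≠ 0 := by
      have := norm_pos_iff.2 (sub_ne_zero.2 hy)
      positivity
    exact ENNReal.continuous_ofReal.continuousAt.comp (by fun_prop (disch := exact hden))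
  · calc ∞ = ∫⁻ z in coneV r S, f z := hcone_top.symm
      _ = ∫⁻ y in (fun z => b + z) '' coneV r S, f (y - b) := by
        simpa using (measurePreserving_add_left volume b).setLIntegral_comp_emb
          (measurableEmbedding_addLeft b) (fun y => f (y - b)) (coneV r S)
      _ ≤ _ := lintegral_mono_set hcone

/-- If `Ω ⊆ ℝ³` is a bounded open set whose exterior `ℝ³ \ closure Ω` satisfies
the cone condition at a boundary point `b ∈ ∂Ω`, then the exterior Dirichlet
energy `∫_{ℝ³ \ closure Ω} ‖∇G(y−x)‖² dy = ∫_{ℝ³ \ closure Ω} 1/(16π²‖y−x‖⁴) dy`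
blows up as `x → b`.  This is formula (1.26) of the paper. -/
theorem exterior_energy_blowup_at_boundary
    (Ω : Set E3) (hΩopen : IsOpen Ω) (hΩb : Bornology.IsBounded Ω)
    (b : E3) (hb : b ∈ frontier Ω)
    (r : ℝ) (hr : 0 < r) (S : Set E3)
    (hSsub : S ⊆ Metric.sphere (0 : E3) 1)
    (hSne : S.Nonempty)
    (hSopen : ∃ U : Set E3, IsOpen U ∧ S = U ∩ Metric.sphere (0 : E3) 1)
    (hcone : (fun z => b + z) '' coneV r S ⊆ (closure Ω)ᶜ) :
    Tendsto
      (fun x : E3 => ∫⁻ y in (closure Ω)ᶜ,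
        ENNReal.ofReal (1 / (16 * π ^ 2 * ‖y - x‖ ^ 4)))
      (nhds b) (nhds ⊤) :=
  exterior_energy_blowup_at_boundary_general Ω b r hr S hSsub hSne hSopen hcone
end
end

section
/- Let D ⊆ ℝ³ be a bounded Lebesgue-measurable set satisfying the cone condition at a point a ∈ ∂D: there exist r > 0 and a nonempty relatively open subset S of the unit sphere such that a + V(r,S) ⊆ D, where V(r,S) = {t·v : 0 < t < r, v ∈ S}. For x ∈ ℝ³ \ closure(D) put A(x) = ∫_D 1/(16π²‖y−x‖⁴) dy and B(x) = ∫_D 1/(16π²‖y−x‖²) dy (both finite nonnegative reals for such x). Then for every sequence (xₙ) in ℝ³ \ closure(D) with xₙ → a, the quotient A(xₙ)/√(A(xₙ) + B(xₙ)) tends to ∞. -/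
/-! The cone contains, at every small scale `δ`, the translate `a + δ • K` of a fixed open piece
`K` of the spherical shell `1 < ‖z‖ < 2`; it has volume `δ³ |K|`. If `‖x - a‖ = δ`, the kernel
`‖y - x‖⁻⁴` is at least `(3δ)⁻⁴` on it, so `A(x) ≥ c / δ → ∞`. Since `t⁻² ≤ t⁻⁴ + 1`,
`B ≤ A + |D| / (16π²)`, hence `A / √(A + B) ≥ √(A / 3) → ∞`. -/

open MeasureTheory Real Filter

noncomputable section

open Metric Module Topology
open scoped Pointwise

section Kernel

variable {E : Type*} [NormedAddCommGroup E] [MeasurableSpace E] [OpensMeasurableSpace E]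
  {μ : Measure E} {D : Set E} {x : E}

theorem integrableOn_inv_norm_sub_pow (hD : MeasurableSet D) (hDμ : μ D ≠ ⊤)
    (hx : x ∉ closure D) (p : ℕ) : IntegrableOn (fun y => (‖y - x‖ ^ p)⁻¹) D μ := by
  rcases D.eq_empty_or_nonempty with rfl | hne
  · exact integrableOn_empty
  have hd : 0 < infDist x D := by
    rw [← infDist_closure]
    exact (isClosed_closure.notMem_iff_infDist_pos hne.closure).1 hx
  refine Measure.integrableOn_of_bounded (M := (infDist x D ^ p)⁻¹) hDμ
    (((continuous_sub_right x).norm.pow p).measurable.inv).aestronglyMeasurable ?_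
  filter_upwards [ae_restrict_mem hD] with y hy
  have hxy : infDist x D ≤ ‖y - x‖ := by
    rw [← dist_eq_norm, dist_comm]
    exact infDist_le_dist_of_mem hy
  rw [norm_inv, norm_pow, norm_norm]
  gcongr

theorem setIntegral_inv_norm_sub_pow_le (hD : MeasurableSet D) (hDμ : μ D ≠ ⊤)
    (hx : x ∉ closure D) (p : ℕ) :
    ∫ y in D, (‖y - x‖ ^ p)⁻¹ ∂μ ≤ ∫ y in D, (‖y - x‖ ^ (2 * p))⁻¹ ∂μ + μ.real D := by
  have hint : ∀ q, IntegrableOn (fun y => (‖y - x‖ ^ q)⁻¹) D μ :=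
    integrableOn_inv_norm_sub_pow hD hDμ hx
  calc ∫ y in D, (‖y - x‖ ^ p)⁻¹ ∂μ ≤ ∫ y in D, ((‖y - x‖ ^ (2 * p))⁻¹ + 1) ∂μ := by
        refine setIntegral_mono_on (hint p) ((hint _).add (integrableOn_const hDμ)) hD fun y _ => ?_
        rw [pow_mul', ← inv_pow (‖y - x‖ ^ p) 2]
        nlinarith [sq_nonneg ((‖y - x‖ ^ p)⁻¹ - 1)]
    _ = _ := by
        rw [integral_add (hint _) (integrableOn_const hDμ), setIntegral_const, smul_eq_mul, mul_one]

end Kernel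

section LowerBound

variable {E : Type*} [NormedAddCommGroup E] [NormedSpace ℝ E] [MeasurableSpace E] [BorelSpace E]
  [FiniteDimensional ℝ E] {μ : Measure E} [μ.IsAddHaarMeasure] {D K : Set E} {a x : E} {R : ℝ}

theorem measureReal_mul_le_setIntegral_inv_norm_sub_pow
    (hK : MeasurableSet K) (hKR : K ⊆ closedBall 0 R) (hxD : x ∉ D)
    (hsub : a +ᵥ ‖x - a‖ • K ⊆ D) {p : ℕ} (hint : IntegrableOn (fun y => (‖y - x‖ ^ p)⁻¹) D μ) :
    μ.real K * ‖x - a‖ ^ finrank ℝ E / ((R + 1) * ‖x - a‖) ^ p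
      ≤ ∫ y in D, (‖y - x‖ ^ p)⁻¹ ∂μ := by
  set δ := ‖x - a‖
  set T := a +ᵥ δ • K
  have hT : μ T = ENNReal.ofReal (δ ^ finrank ℝ E) * μ K := by
    rw [measure_vadd, Measure.addHaar_smul, abs_of_nonneg (by positivity)]
  have hTfin : μ T ≠ ⊤ := by
    rw [hT]
    exact ENNReal.mul_ne_top ENNReal.ofReal_ne_top
      ((measure_mono hKR).trans_lt measure_closedBall_lt_top).ne
  have hbound : ∀ y ∈ T, (((R + 1) * δ) ^ p)⁻¹ ≤ (‖y - x‖ ^ p)⁻¹ := by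
    rintro _ ⟨_, ⟨z, hz, rfl⟩, rfl⟩
    have hpos : 0 < ‖a + δ • z - x‖ :=
      norm_pos_iff.2 (sub_ne_zero.2 fun h => hxD (h ▸ hsub ⟨_, ⟨z, hz, rfl⟩, rfl⟩))
    have hzR : ‖z‖ ≤ R := by simpa using hKR hz
    have hdist : ‖a + δ • z - x‖ ≤ (R + 1) * δ :=
      calc ‖a + δ • z - x‖ = ‖δ • z - (x - a)‖ := by congr 1; abel
        _ ≤ δ * ‖z‖ + δ := by
          grw [norm_sub_le, norm_smul, Real.norm_of_nonneg (norm_nonneg _)]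
        _ ≤ (R + 1) * δ := by nlinarith [norm_nonneg (x - a)]
    exact inv_anti₀ (by positivity) (pow_le_pow_left₀ hpos.le hdist p)
  calc μ.real K * δ ^ finrank ℝ E / ((R + 1) * δ) ^ p
      = (((R + 1) * δ) ^ p)⁻¹ * μ.real T := by
        rw [measureReal_def, measureReal_def, hT, ENNReal.toReal_mul,
          ENNReal.toReal_ofReal (by positivity)]
        ring
    _ ≤ ∫ y in T, (‖y - x‖ ^ p)⁻¹ ∂μ :=
        setIntegral_ge_of_const_le_real ((hK.const_smul₀ δ).const_vadd a) hTfin hbound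
          (hint.mono_set hsub)
    _ ≤ ∫ y in D, (‖y - x‖ ^ p)⁻¹ ∂μ :=
        setIntegral_mono_set hint (.of_forall fun _ => by positivity) (.of_forall hsub)

theorem tendsto_setIntegral_inv_norm_sub_pow_atTop {α : Type*} {l : Filter α} {x : α → E}
    {ρ : ℝ} (hρ : 0 < ρ) (hD : MeasurableSet D) (hDμ : μ D ≠ ⊤) (hK : MeasurableSet K)
    (hKR : K ⊆ closedBall 0 R) (hK0 : 0 < μ K) (hsub : ∀ δ, 0 < δ → δ < ρ → a +ᵥ δ • K ⊆ D)
    (hx : ∀ i, x i ∉ closure D) (hxa : Tendsto x l (𝓝[≠] a)) :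
    Tendsto (fun i => ∫ y in D, (‖y - x i‖ ^ (finrank ℝ E + 1))⁻¹ ∂μ) l atTop := by
  set n := finrank ℝ E
  obtain ⟨z, hz⟩ := nonempty_of_measure_ne_zero hK0.ne'
  have hR : 0 < R + 1 := by linarith [norm_nonneg z, mem_closedBall_zero_iff.1 (hKR hz)]
  have hc : 0 < μ.real K / (R + 1) ^ (n + 1) :=
    div_pos (ENNReal.toReal_pos hK0.ne' ((measure_mono hKR).trans_lt measure_closedBall_lt_top).ne)
      (by positivity)
  have hδ : Tendsto (fun i => ‖x i - a‖) l (𝓝[>] 0) := (tendsto_norm_sub_self_nhdsNE a).comp hxa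
  refine tendsto_atTop_mono' l ?_ ((tendsto_inv_nhdsGT_zero.comp hδ).const_mul_atTop hc)
  filter_upwards [hδ (Ioo_mem_nhdsGT hρ)] with i ⟨hpos, hlt⟩
  calc μ.real K / (R + 1) ^ (n + 1) * ‖x i - a‖⁻¹
      = μ.real K * ‖x i - a‖ ^ n / ((R + 1) * ‖x i - a‖) ^ (n + 1) := by
        rw [mul_pow, pow_succ ‖x i - a‖]
        field_simp
    _ ≤ _ := measureReal_mul_le_setIntegral_inv_norm_sub_pow hK hKR
        (fun h => hx i (subset_closure h)) (hsub _ hpos hlt)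
        (integrableOn_inv_norm_sub_pow hD hDμ (hx i) _)

end LowerBound

theorem tendsto_div_sqrt_add_atTop {α : Type*} {l : Filter α} {f g : α → ℝ} {C : ℝ}
    (hf : Tendsto f l atTop) (hg : ∀ᶠ i in l, 0 ≤ g i) (hgf : ∀ᶠ i in l, g i ≤ f i + C) :
    Tendsto (fun i => f i / √(f i + g i)) l atTop := by
  refine tendsto_atTop_mono' l ?_ (tendsto_sqrt_atTop.comp (hf.atTop_div_const three_pos))
  filter_upwards [hg, hgf, hf.eventually_gt_atTop 0, hf.eventually_ge_atTop C]
    with i hg hgf hf0 hfC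
  rw [Function.comp_apply, le_div_iff₀ (sqrt_pos.2 (by linarith)), ← sqrt_mul (by positivity)]
  calc √(f i / 3 * (f i + g i)) ≤ √(f i ^ 2) := sqrt_le_sqrt (by nlinarith)
    _ = f i := sqrt_sq hf0.le

section Shell

variable {E : Type*} [NormedAddCommGroup E] [NormedSpace ℝ E] {U : Set E}

def coneShell (U : Set E) : Set E :=
  {z | 1 < ‖z‖ ∧ ‖z‖ < 2} ∩ (fun z => ‖z‖⁻¹ • z) ⁻¹' U

theorem isOpen_coneShell (hU : IsOpen U) : IsOpen (coneShell U) := by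
  have hannulus : IsOpen {z : E | 1 < ‖z‖ ∧ ‖z‖ < 2} :=
    (isOpen_lt continuous_const continuous_norm).inter (isOpen_lt continuous_norm continuous_const)
  refine ContinuousOn.isOpen_inter_preimage ?_ hannulus hU
  exact (continuous_norm.continuousOn.inv₀ fun z hz => by linarith [hz.1]).smul continuousOn_id

theorem coneShell_nonempty {v : E} (hvU : v ∈ U) (hv : ‖v‖ = 1) : (coneShell U).Nonempty := by
  have hnorm : ‖(3 / 2 : ℝ) • v‖ = 3 / 2 := by rw [norm_smul, hv]; norm_num
  refine ⟨(3 / 2 : ℝ) • v, ⟨?_, ?_⟩, ?_⟩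
  · rw [hnorm]; norm_num
  · rw [hnorm]; norm_num
  · rw [Set.mem_preimage, hnorm, smul_smul]
    norm_num [hvU]

theorem coneShell_subset_closedBall : coneShell U ⊆ closedBall 0 2 :=
  fun _ hz => mem_closedBall_zero_iff.2 hz.1.2.le

end Shell

theorem smul_coneShell_subset_coneV {U : Set E3} {r δ : ℝ} (hδ : 0 < δ) (hδr : δ < r / 2) :
    δ • coneShell U ⊆ coneV r (U ∩ sphere 0 1) := by
  rintro _ ⟨z, ⟨⟨hz1, hz2⟩, hzU⟩, rfl⟩
  have hz0 : ‖z‖ ≠ 0 := by positivity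
  refine ⟨δ * ‖z‖, ‖z‖⁻¹ • z, by positivity, by nlinarith, ⟨hzU, ?_⟩, ?_⟩
  · simp [norm_smul, hz0]
  · rw [smul_smul, mul_assoc, mul_inv_cancel₀ hz0, mul_one]

theorem gradient_over_H1_quotient_blowup_general
    (D : Set E3) (hD : MeasurableSet D) (hDb : Bornology.IsBounded D)
    (a : E3) (haD : a ∈ frontier D)
    (r : ℝ) (hr : 0 < r) (S : Set E3)
    (hSne : S.Nonempty)
    (hSopen : ∃ U : Set E3, IsOpen U ∧ S = U ∩ Metric.sphere (0 : E3) 1)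
    (hcone : (fun z => a + z) '' coneV r S ⊆ D)
    (A B : E3 → ℝ)
    (hA : ∀ x : E3, A x = ∫ y in D, 1 / (16 * π ^ 2 * ‖y - x‖ ^ 4))
    (hB : ∀ x : E3, B x = ∫ y in D, 1 / (16 * π ^ 2 * ‖y - x‖ ^ 2))
    (x : ℕ → E3) (hx : ∀ n, x n ∈ (closure D)ᶜ)
    (hxa : Tendsto x atTop (nhds a)) :
    Tendsto (fun n => A (x n) / Real.sqrt (A (x n) + B (x n))) atTop atTop := by
  obtain ⟨U, hU, rfl⟩ := hSopen
  obtain ⟨v, hvU, hv⟩ := hSne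
  have hDμ : volume D ≠ ⊤ := hDb.measure_lt_top.ne
  have hkernel : ∀ p w, ∫ y in D, 1 / (16 * π ^ 2 * ‖y - w‖ ^ p)
      = (16 * π ^ 2)⁻¹ * ∫ y in D, (‖y - w‖ ^ p)⁻¹ := fun p w => by
    simp only [one_div, mul_inv, integral_const_mul]
  have hxa' : Tendsto x atTop (𝓝[≠] a) :=
    tendsto_nhdsWithin_of_tendsto_nhds_of_eventually_within _ hxa
      (.of_forall fun n h => hx n (h ▸ frontier_subset_closure haD))
  have hsub : ∀ δ, 0 < δ → δ < r / 2 → a +ᵥ δ • coneShell U ⊆ D := fun δ hδ hδr =>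
    (Set.vadd_set_mono (smul_coneShell_subset_coneV hδ hδr)).trans hcone
  have hI : Tendsto (fun n => ∫ y in D, (‖y - x n‖ ^ (finrank ℝ E3 + 1))⁻¹) atTop atTop :=
    tendsto_setIntegral_inv_norm_sub_pow_atTop (half_pos hr) hD hDμ
      (isOpen_coneShell hU).measurableSet coneShell_subset_closedBall
      ((isOpen_coneShell hU).measure_pos _ (coneShell_nonempty hvU (by simpa using hv)))
      hsub hx hxa'
  rw [finrank_euclideanSpace_fin] at hI
  have hAtop : Tendsto (fun n => A (x n)) atTop atTop := by
    simpa only [hA, hkernel] using hI.const_mul_atTop (by positivity : (0 : ℝ) < (16 * π ^ 2)⁻¹)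
  refine tendsto_div_sqrt_add_atTop (C := volume.real D / (16 * π ^ 2)) hAtop
    (.of_forall fun n => ?_) (.of_forall fun n => ?_)
  · rw [hB]
    exact setIntegral_nonneg hD fun y _ => by positivity
  · rw [hA, hB, hkernel, hkernel, div_eq_inv_mul, ← mul_add]
    gcongr
    exact setIntegral_inv_norm_sub_pow_le hD hDμ (hx n) 2

/-- Let `D ⊆ ℝ³` be a bounded measurable set satisfying the cone condition at
`a ∈ ∂D`.  For `x ∉ closure D` put `A(x) = ∫_D 1/(16π²‖y−x‖⁴) dy`
(`= ‖∇G(·−x)‖²_{L²(D)}`) and `B(x) = ∫_D 1/(16π²‖y−x‖²) dy`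
(`= ‖G(·−x)‖²_{L²(D)}`).  Then along every sequence `xₙ ∉ closure D` with
`xₙ → a`, the quotient `A(xₙ)/√(A(xₙ)+B(xₙ))
 = ‖∇G(·−xₙ)‖²_{L²(D)} / ‖G(·−xₙ)‖_{H¹(D)}` tends to `∞` (Remark 2.1). -/
theorem gradient_over_H1_quotient_blowup
    (D : Set E3) (hD : MeasurableSet D) (hDb : Bornology.IsBounded D)
    (a : E3) (haD : a ∈ frontier D)
    (r : ℝ) (hr : 0 < r) (S : Set E3)
    (hSsub : S ⊆ Metric.sphere (0 : E3) 1)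
    (hSne : S.Nonempty)
    (hSopen : ∃ U : Set E3, IsOpen U ∧ S = U ∩ Metric.sphere (0 : E3) 1)
    (hcone : (fun z => a + z) '' coneV r S ⊆ D)
    (A B : E3 → ℝ)
    (hA : ∀ x : E3, A x = ∫ y in D, 1 / (16 * π ^ 2 * ‖y - x‖ ^ 4))
    (hB : ∀ x : E3, B x = ∫ y in D, 1 / (16 * π ^ 2 * ‖y - x‖ ^ 2))
    (x : ℕ → E3) (hx : ∀ n, x n ∈ (closure D)ᶜ)
    (hxa : Tendsto x atTop (nhds a)) :
    Tendsto (fun n => A (x n) / Real.sqrt (A (x n) + B (x n))) atTop atTop :=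
  gradient_over_H1_quotient_blowup_general D hD hDb a haD r hr S hSne hSopen hcone A B hA hB x hx
    hxa
end
end
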